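/- arXiv:1809.06233 — 7 statements merged into one kernel-verified Lean document; each statement's English description precedes it below -/
import Mathlib

section
/- Ershov's recursion theorem: Let γ be a precomplete numbering of a set S and let f : ℕ → ℕ be a total computable function. Then f has a fixed point modulo ~γ, i.e. there exists a number n such that f(n) ~γ n (that is, γ(f(n)) = γ(n)). -/
/-!
Let `ψ n` be the value of the `n`-th partial recursive function at `n`, and let `g` totalize
`ψ` modulo `~γ`. The total computable function `f ∘ g` has an index `e`, so `ψ e = f (g e)`
and hence `γ (g e) = γ (f (g e))`: the number `g e` is the fixed point.
-/

/-- A numbering `γ : ℕ → S` (a surjection) is precomplete if every partial computable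
function can be totalized modulo `~γ`. -/
def Precomplete {S : Type*} (γ : ℕ → S) : Prop :=
  ∀ ψ : ℕ →. ℕ, Nat.Partrec ψ →
    ∃ f : ℕ → ℕ, Computable f ∧ ∀ n : ℕ, ∀ y ∈ ψ n, γ (f n) = γ y

namespace Nat.Partrec

def diagonal : ℕ →. ℕ := fun n => Code.eval (Denumerable.ofNat Code n) n

theorem diagonal_partrec : Nat.Partrec diagonal :=
  Partrec.nat_iff.mp <| Code.eval_part.comp
    ((Computable.ofNat Code).comp Computable.id) Computable.id

theorem exists_mem_diagonal {h : ℕ → ℕ} (hh : Computable h) :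
    ∃ e, h e ∈ diagonal e := by
  obtain ⟨c, hc⟩ := Code.exists_code.1 (Partrec.nat_iff.mp hh.partrec)
  refine ⟨Encodable.encode c, ?_⟩
  simp only [diagonal, Denumerable.ofNat_encode, hc]
  exact Part.mem_some _

end Nat.Partrec

theorem ershov_recursion_general {S : Type*} (γ : ℕ → S)
    (hpre : Precomplete γ) (f : ℕ → ℕ) (hf : Computable f) :
    ∃ n : ℕ, γ (f n) = γ n := by
  obtain ⟨g, hg, hg_total⟩ := hpre _ Nat.Partrec.diagonal_partrec
  obtain ⟨e, he⟩ := Nat.Partrec.exists_mem_diagonal (hf.comp hg)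
  exact ⟨g e, (hg_total e _ he).symm⟩

/-- Ershov's recursion theorem: every total computable function has a fixed point
modulo a precomplete numbering. -/
theorem ershov_recursion {S : Type*} (γ : ℕ → S) (hsurj : Function.Surjective γ)
    (hpre : Precomplete γ) (f : ℕ → ℕ) (hf : Computable f) :
    ∃ n : ℕ, γ (f n) = γ n :=
  ershov_recursion_general γ hpre f hf
end

section
/- Ershov's recursion theorem with parameters: Let γ be a precomplete numbering of a set S and let h : ℕ × ℕ → ℕ be a total computable binary function. Then there exists a total computable function f : ℕ → ℕ such that for all n, f(n) ~γ h(f(n), n). -/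
open Nat.Partrec Encodable

namespace Precomplete

variable {S : Type*} {γ : ℕ → S}

theorem exists_computable_of_partrec (hpre : Precomplete γ) {α : Type*} [Primcodable α]
    {ψ : α →. ℕ} (hψ : Partrec ψ) :
    ∃ f : α → ℕ, Computable f ∧ ∀ a, ∀ y ∈ ψ a, γ (f a) = γ y := by
  obtain ⟨g, hg, hgψ⟩ := hpre _ hψ
  refine ⟨fun a => g (encode a), hg.comp Computable.encode, fun a y hy => hgψ _ _ ?_⟩
  simpa [encodek] using hy

theorem exists_computable_diagonal (hpre : Precomplete γ) :
    ∃ d : Code → ℕ, Computable d ∧ ∀ c : Code, ∀ y ∈ c.eval (encode c), γ (d c) = γ y :=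
  hpre.exists_computable_of_partrec (Code.eval_part.comp Computable.id Computable.encode)

end Precomplete

theorem Nat.Partrec.Code.exists_computable_eval_encode_self {k : ℕ → Code → ℕ}
    (hk : Computable₂ k) :
    ∃ e : ℕ → Code, Computable e ∧ ∀ n, (e n).eval (encode (e n)) = Part.some (k n (e n)) := by
  have hF : Computable fun m : ℕ => k m.unpair.1 (Denumerable.ofNat Code m.unpair.2) :=
    hk.comp (Computable.fst.comp Computable.unpair)
      ((Computable.ofNat Code).comp (Computable.snd.comp Computable.unpair))
  obtain ⟨c, hc⟩ := Code.exists_code.mp (Partrec.nat_iff.mp hF.partrec)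
  have he : Computable c.curry :=
    Code.primrec₂_curry.to_comp.comp (Computable.const c) Computable.id
  refine ⟨c.curry, he, fun n => ?_⟩
  simp [Code.eval_curry, hc]

theorem ershov_recursion_param_general {S : Type*} (γ : ℕ → S)
    (hpre : Precomplete γ) (h : ℕ → ℕ → ℕ) (hh : Computable₂ h) :
    ∃ f : ℕ → ℕ, Computable f ∧ ∀ n : ℕ, γ (f n) = γ (h (f n) n) := by
  obtain ⟨d, hd, hdiag⟩ := hpre.exists_computable_diagonal
  obtain ⟨e, he, hfix⟩ := Code.exists_computable_eval_encode_self (k := fun n c => h (d c) n)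
    (hh.comp (hd.comp Computable.snd) Computable.fst)
  exact ⟨fun n => d (e n), hd.comp he, fun n => hdiag (e n) _ (hfix n ▸ Part.mem_some _)⟩

/-- Ershov's recursion theorem with parameters. -/
theorem ershov_recursion_param {S : Type*} (γ : ℕ → S) (hsurj : Function.Surjective γ)
    (hpre : Precomplete γ) (h : ℕ → ℕ → ℕ) (hh : Computable₂ h) :
    ∃ f : ℕ → ℕ, Computable f ∧ ∀ n : ℕ, γ (f n) = γ (h (f n) n) :=
  ershov_recursion_param_general γ hpre h hh
end

section
/- Let γ be a precomplete numbering of a set S. Then there exists a total computable function f : ℕ → ℕ such that for every n, if φ_n(f(n)) is defined then φ_n(f(n)) ~γ f(n). -/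
/-- The `n`-th unary partial computable function, in the standard numbering via codes. -/
def phi (n : ℕ) : ℕ →. ℕ := (Denumerable.ofNat Nat.Partrec.Code n).eval

lemma phi_partrec_aux : Partrec (fun x : ℕ => phi x.unpair.2 x) := by
  have h := Nat.Partrec.Code.eval_part.comp
    ((Computable.ofNat Nat.Partrec.Code).comp
      (Computable.snd.comp Computable.unpair)) Computable.id
  exact h

/-- Ershov's recursion theorem, in the form of Andrews–Badaev–Sorbi: there is a total
computable `f` such that for every `n`, if `φ_n(f(n))` is defined then it is
`~γ`-equivalent to `f(n)`. -/
theorem ershov_recursion_ABS {S : Type*} (γ : ℕ → S) (hsurj : Function.Surjective γ)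
    (hpre : Precomplete γ) :
    ∃ f : ℕ → ℕ, Computable f ∧ ∀ n : ℕ, ∀ y ∈ phi n (f n), γ y = γ (f n) := by
  -- totalize the diagonal θ(x) = φ_{x.2}(x)
  have hθ : Nat.Partrec (fun x : ℕ => phi x.unpair.2 x) :=
    Partrec.nat_iff.1 phi_partrec_aux
  obtain ⟨t, ht, htspec⟩ := hpre _ hθ
  -- totalize ψ(x) = φ_{x.1}(t x)
  have hψ : Nat.Partrec (fun x : ℕ => phi x.unpair.1 (t x)) := by
    refine Partrec.nat_iff.1 ?_
    exact Nat.Partrec.Code.eval_part.comp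
      ((Computable.ofNat Nat.Partrec.Code).comp
        (Computable.fst.comp Computable.unpair)) ht
  obtain ⟨s, hscomp, hsspec⟩ := hpre _ hψ
  -- a code for s
  obtain ⟨c, hc⟩ := Nat.Partrec.Code.exists_code.1
    (Partrec.nat_iff.2 hscomp.partrec)
  set e : ℕ := Encodable.encode c with he
  refine ⟨fun n => t (Nat.pair n e), ht.comp
    (Primrec.to_comp (Primrec₂.natPair.comp Primrec.id (Primrec.const e))), ?_⟩
  intro n y hy
  have hpe : phi e = c.eval := by
    simp [phi, he, Denumerable.ofNat_encode]
  -- γ (s ⟨n,e⟩) = γ y, from the ψ-totalizer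
  have h1 : γ (s (Nat.pair n e)) = γ y := by
    apply hsspec (Nat.pair n e) y
    simpa [Nat.unpair_pair] using hy
  -- γ (t ⟨n,e⟩) = γ (s ⟨n,e⟩), from the θ-totalizer, since φ_e is total (= s)
  have h2 : γ (t (Nat.pair n e)) = γ (s (Nat.pair n e)) := by
    apply htspec (Nat.pair n e) (s (Nat.pair n e))
    simp [Nat.unpair_pair, hpe, hc]
  rw [h2, h1]
end

section
/- Let γ : ℕ → S be a numbering, and suppose there exists a total computable function f : ℕ → ℕ such that for every n, if φ_n(f(n)) is defined then φ_n(f(n)) ~γ f(n). Then γ is precomplete. -/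
open Nat.Partrec in
theorem phi_encode_curry (c : Code) (n x : ℕ) :
    phi (Encodable.encode (c.curry n)) x = c.eval (Nat.pair n x) := by
  simp [phi, Code.eval_curry]

open Nat.Partrec in
theorem Nat.Partrec.exists_computable_smn {ψ : ℕ →. ℕ} (hψ : Nat.Partrec ψ) :
    ∃ s : ℕ → ℕ, Computable s ∧ ∀ n x, phi (s n) x = ψ (Nat.pair n x) := by
  obtain ⟨c, rfl⟩ := Code.exists_code.1 hψ
  refine ⟨fun n => Encodable.encode (c.curry n), ?_, phi_encode_curry c⟩
  exact (_root_.Primrec.encode.comp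
    (Code.primrec₂_curry.comp (_root_.Primrec.const c) _root_.Primrec.id)).to_comp

theorem Nat.Partrec.exists_computable_phi_eq_const {ψ : ℕ →. ℕ} (hψ : Nat.Partrec ψ) :
    ∃ e : ℕ → ℕ, Computable e ∧ ∀ n x, phi (e n) x = ψ n := by
  obtain ⟨e, he, hphi⟩ :=
    (hψ.comp (Nat.Partrec.of_primrec Nat.Primrec.left)).exists_computable_smn
  refine ⟨e, he, fun n x => ?_⟩
  simp only [hphi, PFun.coe_val, Nat.unpair_pair]
  exact (Part.bind_eq_bind _ _).trans (Part.bind_some n ψ)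

theorem precomplete_of_fixed_points_general {S : Type*} (γ : ℕ → S)
    (f : ℕ → ℕ) (hf : Computable f)
    (hfix : ∀ n : ℕ, ∀ y ∈ phi n (f n), γ y = γ (f n)) :
    Precomplete γ := by
  intro ψ hψ
  obtain ⟨e, he, hphi⟩ := hψ.exists_computable_phi_eq_const
  refine ⟨f ∘ e, hf.comp he, fun n y hy => ?_⟩
  rw [← hphi n (f (e n))] at hy
  exact (hfix (e n) y hy).symm

/-- Converse of the ABS form of Ershov's recursion theorem: if a numbering admits a total
computable fixed-point finder, then it is precomplete. -/
theorem precomplete_of_fixed_points {S : Type*} (γ : ℕ → S) (hsurj : Function.Surjective γ)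
    (f : ℕ → ℕ) (hf : Computable f)
    (hfix : ∀ n : ℕ, ∀ y ∈ phi n (f n), γ y = γ (f n)) :
    Precomplete γ :=
  precomplete_of_fixed_points_general γ f hf hfix
end

section
/- Visser's ADN theorem: Let γ be a precomplete numbering of a set S, and suppose δ : ℕ ⇀ ℕ is a partial computable diagonal function for γ. Then for every partial computable function ψ : ℕ ⇀ ℕ there exists a total computable function f : ℕ → ℕ such that for every n: (1) if ψ(n) is defined then f(n) ~γ ψ(n), and (2) if ψ(n) is undefined then δ(f(n)) is undefined (we say f totalizes ψ avoiding δ). -/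
/-- A partial function `δ` is a diagonal function for the numbering `γ` if
`δ(x) ≁γ x` for every `x` in the domain of `δ`. -/
def DiagonalFn {S : Type*} (γ : ℕ → S) (δ : ℕ →. ℕ) : Prop :=
  ∀ x : ℕ, ∀ y ∈ δ x, γ y ≠ γ x

/-!
Precompleteness, applied to the universal function, yields a computable `F` with
`F e n ~γ φₑ(n)` whenever `φₑ(n)` is defined. By the recursion theorem pick an index `e` such
that `φₑ(n)` is the first value to appear in a race between `ψ(n)` and `δ(F e n)`, and put
`f n = F e n`. Were the race won by `y ∈ δ(f n)`, we would get `f n ~γ φₑ(n) = y`, contradicting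
that `δ` is diagonal; so every value of `φₑ(n)` is a value of `ψ(n)`, and the race halts as soon
as either side does.
-/

open Nat.Partrec

theorem Precomplete.exists_computable₂_totalize_eval {S : Type*} {γ : ℕ → S}
    (hpre : Precomplete γ) :
    ∃ F : Code → ℕ → ℕ, Computable₂ F ∧ ∀ c n, ∀ y ∈ c.eval n, γ (F c n) = γ y := by
  let Φ : ℕ →. ℕ := fun p => (Denumerable.ofNat Code p.unpair.1).eval p.unpair.2
  have hΦ : Nat.Partrec Φ := Partrec.nat_iff.1 <| Code.eval_part.comp
    ((Computable.ofNat _).comp (Computable.fst.comp Computable.unpair))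
    (Computable.snd.comp Computable.unpair)
  obtain ⟨G, hG, hGΦ⟩ := hpre Φ hΦ
  refine ⟨fun c n => G (Nat.pair (Encodable.encode c) n),
    hG.comp (Primrec₂.natPair.to_comp.comp (Computable.encode.comp .fst) .snd), ?_⟩
  intro c n y hy
  exact hGΦ _ y (by simpa [Φ] using hy)

theorem exists_totalize_avoiding_of_totalize_eval {S : Type*} {γ : ℕ → S}
    {F : Code → ℕ → ℕ} (hF : Computable₂ F) (hFγ : ∀ c n, ∀ y ∈ c.eval n, γ (F c n) = γ y)
    {δ : ℕ →. ℕ} (hδ : Partrec δ) (hdiag : DiagonalFn γ δ) {ψ : ℕ →. ℕ} (hψ : Partrec ψ) :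
    ∃ c : Code, (∀ n, ∀ y ∈ ψ n, γ (F c n) = γ y) ∧ (∀ n, ¬(ψ n).Dom → ¬(δ (F c n)).Dom) := by
  obtain ⟨race, hrace, hraceSpec⟩ := Partrec.merge'
    (hψ.comp Computable.snd) (hδ.comp (hF.comp Computable.fst Computable.snd))
  obtain ⟨c, hc⟩ := Code.fixed_point₂ (f := fun c n => race (c, n)) hrace.to₂
  have mem_race : ∀ {n x}, x ∈ race (c, n) → x ∈ c.eval n := fun hx => by rwa [hc]
  have mem_ψ_of_mem_race : ∀ {n x}, x ∈ race (c, n) → x ∈ ψ n := fun {n x} hx =>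
    ((hraceSpec (c, n)).1 x hx).resolve_right fun hxδ =>
      hdiag _ x hxδ (hFγ c n x (mem_race hx)).symm
  refine ⟨c, fun n y hy => ?_, fun n hψn hδn => ?_⟩
  · have hdom : (race (c, n)).Dom := (hraceSpec (c, n)).2.2 (.inl (Part.dom_iff_mem.2 ⟨y, hy⟩))
    have hx := Part.get_mem hdom
    rw [hFγ c n _ (mem_race hx), Part.mem_unique (mem_ψ_of_mem_race hx) hy]
  · have hdom : (race (c, n)).Dom := (hraceSpec (c, n)).2.2 (.inr hδn)
    exact hψn (Part.dom_iff_mem.2 ⟨_, mem_ψ_of_mem_race (Part.get_mem hdom)⟩)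

theorem visser_ADN_general {S : Type*} (γ : ℕ → S)
    (hpre : Precomplete γ) (δ : ℕ →. ℕ) (hδ : Nat.Partrec δ) (hdiag : DiagonalFn γ δ)
    (ψ : ℕ →. ℕ) (hψ : Nat.Partrec ψ) :
    ∃ f : ℕ → ℕ, Computable f ∧
      (∀ n : ℕ, ∀ y ∈ ψ n, γ (f n) = γ y) ∧
      (∀ n : ℕ, ¬ (ψ n).Dom → ¬ (δ (f n)).Dom) := by
  obtain ⟨F, hF, hFγ⟩ := hpre.exists_computable₂_totalize_eval
  obtain ⟨c, hψF, hδF⟩ := exists_totalize_avoiding_of_totalize_eval hF hFγ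
    (Partrec.nat_iff.2 hδ) hdiag (Partrec.nat_iff.2 hψ)
  exact ⟨F c, hF.comp (Computable.const c) Computable.id, hψF, hδF⟩

/-- Visser's ADN theorem: given a precomplete numbering `γ` and a partial computable
diagonal function `δ` for `γ`, every partial computable `ψ` can be totalized avoiding `δ`. -/
theorem visser_ADN {S : Type*} (γ : ℕ → S) (hsurj : Function.Surjective γ)
    (hpre : Precomplete γ) (δ : ℕ →. ℕ) (hδ : Nat.Partrec δ) (hdiag : DiagonalFn γ δ)
    (ψ : ℕ →. ℕ) (hψ : Nat.Partrec ψ) :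
    ∃ f : ℕ → ℕ, Computable f ∧
      (∀ n : ℕ, ∀ y ∈ ψ n, γ (f n) = γ y) ∧
      (∀ n : ℕ, ¬ (ψ n).Dom → ¬ (δ (f n)).Dom) :=
  visser_ADN_general γ hpre δ hδ hdiag ψ hψ
end

section
/- Recursion theorem for precomplete generalized numberings on pca's: Suppose A is a partial combinatory algebra and γ : A → S is a precomplete generalized numbering. Then there exists a total f ∈ A such that for all g ∈ A, if g(fg) is defined then g(fg) ~γ fg. -/
/-- Application extended to partial terms: `papp app x y` is the (strict) application
of the possibly-undefined term `x` to the possibly-undefined term `y`. -/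
def papp {A : Type*} (app : A → A →. A) (x y : Part A) : Part A :=
  x.bind fun a => y.bind fun b => app a b

/-- Recursion theorem for precomplete generalized numberings on pca's: there is a total
`f` such that for all `g`, if `g (f g)` is defined then `g (f g) ~γ f g`. -/
theorem recursion_pca {A S : Type*} (app : A → A →. A) (k s : A)
    (hk1 : ∀ a : A, (app k a).Dom)
    (hk2 : ∀ a b : A, papp app (app k a) (Part.some b) = Part.some a)
    (hs1 : ∀ a : A, (app s a).Dom)
    (hs2 : ∀ a b : A, (papp app (app s a) (Part.some b)).Dom)
    (hs3 : ∀ a b c : A,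
      papp app (papp app (app s a) (Part.some b)) (Part.some c) =
        papp app (app a c) (app b c))
    (γ : A → S) (hsurj : Function.Surjective γ)
    (hpre : ∀ b : A, ∃ f : A, (∀ a : A, (app f a).Dom) ∧
      ∀ a : A, (app b a).Dom → ∀ x ∈ app f a, ∀ y ∈ app b a, γ x = γ y) :
    ∃ f : A, (∀ a : A, (app f a).Dom) ∧
      ∀ g : A, (papp app (Part.some g) (app f g)).Dom →
        ∀ x ∈ papp app (Part.some g) (app f g), ∀ y ∈ app f g, γ x = γ y := by
  classical
  have hget : ∀ (x : Part A) (h : x.Dom), x = Part.some (x.get h) := fun x h =>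
    (Part.some_get h).symm
  have psome : ∀ a b : A, papp app (Part.some a) (Part.some b) = app a b := by
    intro a b; simp [papp]
  -- kg a : the element k·a, with app (kg a) b = some a
  have hkgApp : ∀ a b : A, app ((app k a).get (hk1 a)) b = Part.some a := by
    intro a b
    have h1 := hk2 a b
    rwa [hget (app k a) (hk1 a), psome] at h1
  -- the identity element i = s k k
  set i : A := (papp app (app s k) (Part.some k)).get (hs2 k k) with hi
  have hiEq : papp app (app s k) (Part.some k) = Part.some i := hget _ (hs2 k k)
  have hiApp : ∀ a : A, app i a = Part.some a := by
    intro a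
    have h1 := hs3 k k a
    rw [hiEq, psome] at h1
    rw [h1]
    calc papp app (app k a) (app k a)
        = papp app (app k a) (Part.some ((app k a).get (hk1 a))) := by
          exact congrArg _ (hget _ (hk1 a))
      _ = Part.some a := hk2 a _
  -- the diagonal element d = s i i, with app d a = app a a
  set d : A := (papp app (app s i) (Part.some i)).get (hs2 i i) with hd
  have hdEq : papp app (app s i) (Part.some i) = Part.some d := hget _ (hs2 i i)
  have hdApp : ∀ a : A, app d a = app a a := by
    intro a
    have h1 := hs3 i i a
    rw [hdEq, psome, hiApp, psome] at h1
    exact h1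
  -- h from precompleteness applied to d
  obtain ⟨h, htot, hprop⟩ := hpre d
  -- elements k·s and k·h
  set ks : A := (app k s).get (hk1 s) with hks
  set kh : A := (app k h).get (hk1 h) with hkh
  -- a1 = s (k s) k : app a1 g = app s (kg g)
  set a1 : A := (papp app (app s ks) (Part.some k)).get (hs2 ks k) with ha1
  have ha1Eq : papp app (app s ks) (Part.some k) = Part.some a1 := hget _ (hs2 ks k)
  have ha1App : ∀ g : A, app a1 g = app s ((app k g).get (hk1 g)) := by
    intro g
    have h1 := hs3 ks k g
    rw [ha1Eq, psome, hkgApp, hget (app k g) (hk1 g), psome] at h1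
    exact h1
  -- c g = s (k g) h, with app (c g) x = papp (some g) (app h x)
  have hcDom : ∀ g : A, (papp app (app s ((app k g).get (hk1 g))) (Part.some h)).Dom :=
    fun g => hs2 _ h
  set c : A → A := fun g =>
    (papp app (app s ((app k g).get (hk1 g))) (Part.some h)).get (hcDom g) with hc
  have hcEq : ∀ g : A,
      papp app (app s ((app k g).get (hk1 g))) (Part.some h) = Part.some (c g) :=
    fun g => hget _ (hcDom g)
  have hcApp : ∀ g x : A, app (c g) x = papp app (Part.some g) (app h x) := by
    intro g x
    have h1 := hs3 ((app k g).get (hk1 g)) h x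
    rw [hcEq, psome, hkgApp] at h1
    exact h1
  -- u = s a1 (k h) : app u g = some (c g)
  set u : A := (papp app (app s a1) (Part.some kh)).get (hs2 a1 kh) with hu
  have huEq : papp app (app s a1) (Part.some kh) = Part.some u := hget _ (hs2 a1 kh)
  have huApp : ∀ g : A, app u g = Part.some (c g) := by
    intro g
    have h1 := hs3 a1 kh g
    rw [huEq, psome, ha1App, hkgApp, hcEq] at h1
    exact h1
  -- f = s (k h) u : app f g = app h (c g)
  set f : A := (papp app (app s kh) (Part.some u)).get (hs2 kh u) with hf
  have hfEq : papp app (app s kh) (Part.some u) = Part.some f := hget _ (hs2 kh u)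
  have hfApp : ∀ g : A, app f g = app h (c g) := by
    intro g
    have h1 := hs3 kh u g
    rw [hfEq, psome, hkgApp, huApp, psome] at h1
    exact h1
  refine ⟨f, fun g => by rw [hfApp]; exact htot (c g), ?_⟩
  intro g hdom x hx y hy
  -- key: app (c g) (c g) = papp (some g) (app f g)
  have key : app (c g) (c g) = papp app (Part.some g) (app f g) := by
    rw [hfApp]; exact hcApp g (c g)
  have hdDom : (app d (c g)).Dom := by
    rw [hdApp, key]; exact hdom
  have hx' : x ∈ app d (c g) := by rw [hdApp, key]; exact hx
  have hy' : y ∈ app h (c g) := by rw [← hfApp]; exact hy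
  exact (hprop (c g) hdDom y hy' x hx').symm
end

section
/- The standard numbering n ↦ φ_n of the unary partial computable functions is complete, with the totally undefined function as special element: for every partial computable function ψ : ℕ ⇀ ℕ there exists a total computable function f : ℕ → ℕ such that for every n, if ψ(n) is defined then φ_{f(n)} = φ_{ψ(n)}, and if ψ(n) is undefined then φ_{f(n)} is the nowhere-defined partial function. -/
theorem phi_partrec₂ : Partrec₂ phi :=
  Nat.Partrec.Code.eval_part.comp ((Computable.ofNat _).comp Computable.fst) Computable.snd

theorem partrec₂_bind_phi {α : Type*} [Primcodable α] {ψ : α →. ℕ} (hψ : Partrec ψ) :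
    Partrec₂ fun a x => (ψ a).bind fun y => phi y x :=
  (hψ.comp Computable.fst).bind (phi_partrec₂.comp Computable.snd (Computable.snd.comp Computable.fst))

theorem exists_computable_phi_eq {g : ℕ → ℕ →. ℕ} (hg : Partrec₂ g) :
    ∃ f : ℕ → ℕ, Computable f ∧ ∀ n, phi (f n) = g n := by
  have hG : Nat.Partrec fun p => g p.unpair.1 p.unpair.2 :=
    Partrec.nat_iff.mp (hg.comp (Computable.fst.comp Computable.unpair)
      (Computable.snd.comp Computable.unpair))
  obtain ⟨c, hc⟩ := Nat.Partrec.Code.exists_code.mp hG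
  refine ⟨fun n => Encodable.encode (c.curry n),
    Computable.encode.comp (Nat.Partrec.Code.primrec₂_curry.to_comp.comp
      (Computable.const c) Computable.id), fun n => ?_⟩
  funext x
  simp only [phi, Denumerable.ofNat_encode, Nat.Partrec.Code.eval_curry, hc, Nat.unpair_pair]

/-- The standard numbering `n ↦ φ_n` of the unary partial computable functions is
complete, with the nowhere-defined function as special element. -/
theorem phi_complete (ψ : ℕ →. ℕ) (hψ : Nat.Partrec ψ) :
    ∃ f : ℕ → ℕ, Computable f ∧ ∀ n : ℕ,
      (∀ y ∈ ψ n, phi (f n) = phi y) ∧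
      (¬ (ψ n).Dom → phi (f n) = fun _ => Part.none) := by
  obtain ⟨f, hf, hphi⟩ := exists_computable_phi_eq (partrec₂_bind_phi (Partrec.nat_iff.mpr hψ))
  refine ⟨f, hf, fun n => ⟨fun y hy => ?_, fun hn => ?_⟩⟩
  · rw [hphi, Part.eq_some_iff.mpr hy]
    exact funext fun x => Part.bind_some y _
  · rw [hphi, Part.eq_none_iff'.mpr hn]
    exact funext fun x => Part.bind_none _
end
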